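/- arXiv:2209.07481 — 2 statements merged into one kernel-verified Lean document; each statement's English description precedes it below -/
import Mathlib

section
/- Let ρ : I → ℝ be strictly monotonic and continuous on an interval I, and f : ρ(I) → ℝ be differentiable and strictly convex. Given inputs u₁,…,u_N ∈ I and weights βᵢ ≥ 0 with ∑βᵢ = 1 such that ∑ᵢ βᵢ ρ(uᵢ) ∈ ρ(I), the function μ ↦ ∑ᵢ βᵢ D_f(ρ(uᵢ), ρ(μ)) over μ ∈ I has unique minimizer μ* = ρ⁻¹(∑ᵢ βᵢ ρ(uᵢ)), the quasi-arithmetic mean; and the minimum value equals ∑ᵢ βᵢ f(ρ(uᵢ)) − f(ρ(μ*)). -/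
/-!
Averaging the Bregman divergence against the weights `β` gives the compensation identity
`∑ βᵢ D_f(xᵢ, b) = ∑ βᵢ D_f(xᵢ, m) + D_f(m, b)` with `m = ∑ βᵢ xᵢ`, because `D_f(x, b)` is affine
in `x` up to the term `f x`. Strict convexity makes `D_f(m, b)` positive for `b ≠ m`, and injectivity
of `ρ` turns `μ ≠ μ*` into `ρ μ ≠ m`.
-/

/-- Scalar Bregman divergence generated by `f`. -/
noncomputable def breg (f : ℝ → ℝ) (a b : ℝ) : ℝ := f a - f b - (a - b) * deriv f b

lemma breg_pos {S : Set ℝ} {f : ℝ → ℝ} (hconv : StrictConvexOn ℝ S f) {a b : ℝ}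
    (hf : DifferentiableAt ℝ f b) (ha : a ∈ S) (hb : b ∈ S) (hab : a ≠ b) :
    0 < breg f a b := by
  unfold breg
  rcases hab.lt_or_gt with h | h
  · have hslope := hconv.slope_lt_deriv ha hb h hf
    rw [slope_def_field, div_lt_iff₀ (sub_pos.2 h)] at hslope
    linarith
  · have hslope := hconv.deriv_lt_slope hb ha h hf
    rw [slope_def_field, lt_div_iff₀ (sub_pos.2 h)] at hslope
    linarith

section WeightedSum

variable {ι : Type*} (s : Finset ι) (f : ℝ → ℝ) (β x : ι → ℝ)

lemma sum_mul_breg (hsum : ∑ i ∈ s, β i = 1) (b : ℝ) :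
    ∑ i ∈ s, β i * breg f (x i) b
      = ∑ i ∈ s, β i * f (x i) - f b - (∑ i ∈ s, β i * x i - b) * deriv f b := by
  have hexpand : ∀ i, β i * breg f (x i) b
      = β i * f (x i) - β i * f b - (β i * x i - β i * b) * deriv f b := fun i => by
    unfold breg; ring
  simp only [hexpand, Finset.sum_sub_distrib, ← Finset.sum_mul, hsum]
  ring

lemma sum_mul_breg_eq_add_breg (hsum : ∑ i ∈ s, β i = 1) (b : ℝ) :
    ∑ i ∈ s, β i * breg f (x i) b
      = ∑ i ∈ s, β i * breg f (x i) (∑ i ∈ s, β i * x i) + breg f (∑ i ∈ s, β i * x i) b := by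
  rw [sum_mul_breg s f β x hsum, sum_mul_breg s f β x hsum, breg]
  ring

end WeightedSum

theorem quasiArithmeticMean_breg_min_general {I : Set ℝ} (ρ : ℝ → ℝ)
    (hmono : StrictMonoOn ρ I ∨ StrictAntiOn ρ I)
    (f : ℝ → ℝ) (hdiff : Differentiable ℝ f) (hconv : StrictConvexOn ℝ (ρ '' I) f)
    {N : ℕ} (u : Fin N → ℝ)
    (β : Fin N → ℝ) (hsum : ∑ i, β i = 1)
    (μstar : ℝ) (hμI : μstar ∈ I) (hμ : ρ μstar = ∑ i, β i * ρ (u i)) :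
    (∀ μ ∈ I, μ ≠ μstar →
      ∑ i, β i * breg f (ρ (u i)) (ρ μstar) < ∑ i, β i * breg f (ρ (u i)) (ρ μ)) ∧
    ∑ i, β i * breg f (ρ (u i)) (ρ μstar) = ∑ i, β i * f (ρ (u i)) - f (ρ μstar) := by
  have hinj : Set.InjOn ρ I := hmono.elim StrictMonoOn.injOn StrictAntiOn.injOn
  refine ⟨fun μ hμmem hne => ?_, ?_⟩
  · have hgap : 0 < breg f (ρ μstar) (ρ μ) :=
      breg_pos hconv (hdiff _) (Set.mem_image_of_mem ρ hμI) (Set.mem_image_of_mem ρ hμmem)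
        fun h => hne (hinj hμmem hμI h.symm)
    have hsplit := sum_mul_breg_eq_add_breg Finset.univ f β (fun i => ρ (u i)) hsum (ρ μ)
    rw [← hμ] at hsplit
    linarith
  · rw [sum_mul_breg Finset.univ f β (fun i => ρ (u i)) hsum, ← hμ]
    ring

/-- The quasi-arithmetic mean `μ* = ρ⁻¹(∑ βᵢ ρ(uᵢ))` is the unique minimizer of
`μ ↦ ∑ βᵢ D_f(ρ(uᵢ), ρ(μ))` over `I`, and the minimum value is the Jensen gap. -/
theorem quasiArithmeticMean_breg_min {I : Set ℝ} (ρ : ℝ → ℝ)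
    (hmono : StrictMonoOn ρ I ∨ StrictAntiOn ρ I) (hcont : ContinuousOn ρ I)
    (f : ℝ → ℝ) (hdiff : Differentiable ℝ f) (hconv : StrictConvexOn ℝ (ρ '' I) f)
    {N : ℕ} (u : Fin N → ℝ) (hu : ∀ i, u i ∈ I)
    (β : Fin N → ℝ) (hβ : ∀ i, 0 ≤ β i) (hsum : ∑ i, β i = 1)
    (μstar : ℝ) (hμI : μstar ∈ I) (hμ : ρ μstar = ∑ i, β i * ρ (u i)) :
    (∀ μ ∈ I, μ ≠ μstar →
      ∑ i, β i * breg f (ρ (u i)) (ρ μstar) < ∑ i, β i * breg f (ρ (u i)) (ρ μ)) ∧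
    ∑ i, β i * breg f (ρ (u i)) (ρ μstar) = ∑ i, β i * f (ρ (u i)) - f (ρ μstar) :=
  quasiArithmeticMean_breg_min_general ρ hmono f hdiff hconv u β hsum μstar hμI hμ
end

section
/- Fix q ∈ (0,1), let ρ(u) = log_q(u) and f(r) = (1/(2−q))·exp_q(r)^{2−q} − 1/(2−q). Then for a, b > 0, the scalar Bregman divergence D_f(ρ(a), ρ(b)) equals the pointwise Beta-divergence integrand of order 2−q applied to (b,a): D_f(ρ(a),ρ(b)) = (1/((1−q)(2−q))) b^{2−q} + (1/(2−q)) a^{2−q} − (1/(1−q)) b·a^{1−q}, and this quantity is nonnegative with equality iff a = b. -/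
noncomputable def logq (q u : ℝ) : ℝ := (u ^ (1 - q) - 1) / (1 - q)

noncomputable def expq (q t : ℝ) : ℝ := (max (1 + (1 - q) * t) 0) ^ (1 / (1 - q))

/-!
Since `exp_q' = exp_q ^ q`, the generator `f` has derivative `f' = exp_q`, so `f'(log_q b) = b`
and the Bregman divergence becomes an explicit expression in `a` and `b`. That expression is
`1 / (1 - q)` times the gap in the weighted AM-GM inequality for `b ^ (2 - q)` and `a ^ (2 - q)`
with weights `1 / (2 - q)` and `(1 - q) / (2 - q)`, whose equality case is `a = b`.
-/

open Real

/-- The Beta-divergence integrand of order `2 - q`, evaluated at `(b, a)`. -/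
noncomputable def betaIntegrand (q a b : ℝ) : ℝ :=
  (1 / ((1 - q) * (2 - q))) * b ^ (2 - q) + (1 / (2 - q)) * a ^ (2 - q) -
    (1 / (1 - q)) * (b * a ^ (1 - q))

section

variable {q : ℝ}

theorem one_add_mul_logq (hq : q ≠ 1) (u : ℝ) : 1 + (1 - q) * logq q u = u ^ (1 - q) := by
  have : 1 - q ≠ 0 := sub_ne_zero.2 hq.symm
  unfold logq
  field_simp
  ring

theorem expq_eq_rpow {t : ℝ} (ht : 0 ≤ 1 + (1 - q) * t) :
    expq q t = (1 + (1 - q) * t) ^ (1 / (1 - q)) := by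
  rw [expq, max_eq_left ht]

theorem expq_pos {t : ℝ} (ht : 0 < 1 + (1 - q) * t) : 0 < expq q t := by
  rw [expq_eq_rpow ht.le]
  positivity

theorem expq_logq (hq : q ≠ 1) {u : ℝ} (hu : 0 < u) : expq q (logq q u) = u := by
  have h1q : 1 - q ≠ 0 := sub_ne_zero.2 hq.symm
  rw [expq_eq_rpow (one_add_mul_logq hq u ▸ (rpow_pos_of_pos hu _).le), one_add_mul_logq hq,
    ← rpow_mul hu.le, mul_one_div_cancel h1q, rpow_one]

theorem hasDerivAt_expq (hq : q ≠ 1) {t : ℝ} (ht : 0 < 1 + (1 - q) * t) :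
    HasDerivAt (expq q) (expq q t ^ q) t := by
  have h1q : 1 - q ≠ 0 := sub_ne_zero.2 hq.symm
  have hlin : HasDerivAt (fun s => 1 + (1 - q) * s) (1 - q) t := by
    simpa using ((hasDerivAt_id t).const_mul (1 - q)).const_add 1
  have hloc : (fun s => (1 + (1 - q) * s) ^ (1 / (1 - q))) =ᶠ[nhds t] expq q := by
    filter_upwards [continuousAt_const.eventually_lt hlin.continuousAt ht] with s hs
    exact (expq_eq_rpow (le_of_lt hs)).symm
  refine ((hlin.rpow_const (Or.inl ht.ne')).congr_of_eventuallyEq hloc.symm).congr_deriv ?_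
  rw [expq_eq_rpow ht.le, ← rpow_mul ht.le]
  field_simp
  congr 1
  ring

theorem hasDerivAt_expq_rpow_two_sub (hq : q ≠ 1) (h2q : q ≠ 2) {t : ℝ}
    (ht : 0 < 1 + (1 - q) * t) :
    HasDerivAt (fun r => (1 / (2 - q)) * expq q r ^ (2 - q) - 1 / (2 - q)) (expq q t) t := by
  have h2q' : 2 - q ≠ 0 := sub_ne_zero.2 h2q.symm
  have hpos := expq_pos ht
  refine ((((hasDerivAt_expq hq ht).rpow_const (Or.inl hpos.ne')).const_mul _).sub_const
    _).congr_deriv ?_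
  calc 1 / (2 - q) * (expq q t ^ q * (2 - q) * expq q t ^ (2 - q - 1))
      = expq q t ^ (q + (2 - q - 1)) := by rw [rpow_add hpos]; field_simp
    _ = expq q t := by rw [show q + (2 - q - 1) = 1 by ring, rpow_one]

theorem breg_logq_eq_betaIntegrand (hq : q ≠ 1) (h2q : q ≠ 2) {a b : ℝ} (ha : 0 < a)
    (hb : 0 < b) :
    breg (fun r => (1 / (2 - q)) * expq q r ^ (2 - q) - 1 / (2 - q)) (logq q a) (logq q b) =
      betaIntegrand q a b := by
  have h1q : 1 - q ≠ 0 := sub_ne_zero.2 hq.symm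
  have h2q' : 2 - q ≠ 0 := sub_ne_zero.2 h2q.symm
  have hderiv : deriv (fun r => (1 / (2 - q)) * expq q r ^ (2 - q) - 1 / (2 - q))
      (logq q b) = b := by
    have ht : 0 < 1 + (1 - q) * logq q b := one_add_mul_logq hq b ▸ rpow_pos_of_pos hb _
    rw [(hasDerivAt_expq_rpow_two_sub hq h2q ht).deriv, expq_logq hq hb]
  have hb2 : b ^ (2 - q) = b * b ^ (1 - q) := by
    rw [show 2 - q = 1 + (1 - q) by ring, rpow_add hb, rpow_one]
  rw [breg, hderiv, expq_logq hq ha, expq_logq hq hb, betaIntegrand, logq, logq, hb2]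
  field_simp
  ring

theorem betaIntegrand_eq_amgm_gap (hq : q < 1) {a b : ℝ} (ha : 0 ≤ a) (hb : 0 ≤ b) :
    betaIntegrand q a b =
      ((1 / (2 - q)) * b ^ (2 - q) + ((1 - q) / (2 - q)) * a ^ (2 - q) -
        (b ^ (2 - q)) ^ (1 / (2 - q)) * (a ^ (2 - q)) ^ ((1 - q) / (2 - q))) / (1 - q) := by
  have h1q : 1 - q ≠ 0 := by linarith
  have h2q : 2 - q ≠ 0 := by linarith
  rw [← rpow_mul hb, ← rpow_mul ha, mul_one_div_cancel h2q, rpow_one,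
    mul_div_cancel₀ _ h2q, betaIntegrand]
  field_simp

theorem betaIntegrand_nonneg (hq : q < 1) {a b : ℝ} (ha : 0 ≤ a) (hb : 0 ≤ b) :
    0 ≤ betaIntegrand q a b := by
  rw [betaIntegrand_eq_amgm_gap hq ha hb]
  have h1q : 0 < 1 - q := by linarith
  have h2q : 0 < 2 - q := by linarith
  exact div_nonneg (sub_nonneg.2 (geom_mean_le_arith_mean2_weighted (by positivity)
    (by positivity) (by positivity) (by positivity) (by field_simp; ring))) h1q.le

theorem betaIntegrand_eq_zero_iff (hq : q < 1) {a b : ℝ} (ha : 0 ≤ a) (hb : 0 ≤ b) :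
    betaIntegrand q a b = 0 ↔ a = b := by
  have h1q : 1 - q ≠ 0 := by linarith
  have h2q : 0 < 2 - q := by linarith
  rw [betaIntegrand_eq_amgm_gap hq ha hb, div_eq_zero_iff, or_iff_left h1q, sub_eq_zero,
    eq_comm, geom_mean_eq_arith_mean2_weighted_iff_of_pos (by positivity)
      (div_pos (by linarith) h2q) (by positivity) (by positivity) (by field_simp; ring),
    rpow_left_inj hb ha h2q.ne', eq_comm]

end

/-- The Bregman divergence generated by `f(r) = (1/(2−q)) exp_q(r)^{2−q} − 1/(2−q)` in the
`log_q` representation is the pointwise Beta-divergence integrand of order `2−q`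
applied to `(b,a)`; it is nonnegative, and zero iff `a = b`. -/
theorem breg_logq_eq_beta_integrand (q : ℝ) (hq : q ∈ Set.Ioo (0:ℝ) 1)
    (a b : ℝ) (ha : 0 < a) (hb : 0 < b) :
    breg (fun r => (1 / (2 - q)) * expq q r ^ (2 - q) - 1 / (2 - q))
        (logq q a) (logq q b) =
      (1 / ((1 - q) * (2 - q))) * b ^ (2 - q) + (1 / (2 - q)) * a ^ (2 - q) -
        (1 / (1 - q)) * (b * a ^ (1 - q)) ∧
    0 ≤ (1 / ((1 - q) * (2 - q))) * b ^ (2 - q) + (1 / (2 - q)) * a ^ (2 - q) -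
        (1 / (1 - q)) * (b * a ^ (1 - q)) ∧
    ((1 / ((1 - q) * (2 - q))) * b ^ (2 - q) + (1 / (2 - q)) * a ^ (2 - q) -
        (1 / (1 - q)) * (b * a ^ (1 - q)) = 0 ↔ a = b) := by
  have hq1 : q < 1 := hq.2
  exact ⟨breg_logq_eq_betaIntegrand hq1.ne (by linarith) ha hb,
    betaIntegrand_nonneg hq1 ha.le hb.le, betaIntegrand_eq_zero_iff hq1 ha.le hb.le⟩
end
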